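/- arXiv:2412.03521 — 5 statements merged into one kernel-verified Lean document; each statement's English description precedes it below -/
import Mathlib

section
/- For any nonnegative integer n, any t ≥ 0, a nonnegative monotone decreasing function g on [0,∞) with g(0) < ∞, and a nonnegative integrable function k on [0,∞) with tail function h(t) = ∫_t^∞ k(s) ds, one has ∫_0^t g((t−s)/2^n) k(s) ds ≤ g(0) · h(t/2^(n+1)) + h(0) · g(t/2^(n+1)). -/
open MeasureTheory Set Filter

theorem gronwall_part_i (g k h : ℝ → ℝ)
    (hg_nonneg : ∀ t ∈ Ici (0:ℝ), 0 ≤ g t)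
    (hg_anti : AntitoneOn g (Ici 0))
    (hk_nonneg : ∀ t ∈ Ici (0:ℝ), 0 ≤ k t)
    (hk_int : IntegrableOn k (Ici 0))
    (hh : ∀ t, h t = ∫ s in Ioi t, k s)
    (n : ℕ) (t : ℝ) (ht : 0 ≤ t) :
    ∫ s in (0:ℝ)..t, g ((t - s) / 2 ^ n) * k s
      ≤ g 0 * h (t / 2 ^ (n + 1)) + h 0 * g (t / 2 ^ (n + 1)) := by
  set c := t / 2 ^ (n + 1) with hc
  have hc0 : 0 ≤ c := by positivity
  have h2 : (2:ℝ) ≤ 2 ^ (n + 1) := by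
    calc (2:ℝ) = 2 ^ 1 := (pow_one 2).symm
    _ ≤ 2 ^ (n + 1) := pow_le_pow_right₀ one_le_two (Nat.le_add_left 1 n)
  have hct : c ≤ t / 2 := by
    rw [hc]; gcongr
  have hknn : ∀ x : ℝ, 0 ≤ x → ∀ᵐ s ∂(volume.restrict (Ioi x)), 0 ≤ k s := by
    intro x hx
    refine ae_restrict_of_forall_mem measurableSet_Ioi ?_
    intro s hs; exact hk_nonneg s (hx.trans hs.le)
  have hhnn : ∀ x : ℝ, 0 ≤ x → 0 ≤ h x := by
    intro x hx
    rw [hh]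
    exact setIntegral_nonneg measurableSet_Ioi fun s hs => hk_nonneg s (hx.trans hs.le)
  have hkIoi : ∀ x : ℝ, 0 ≤ x → IntegrableOn k (Ioi x) := by
    intro x hx
    exact hk_int.mono_set fun s hs => hx.trans hs.le
  have hIocle : ∀ a b : ℝ, 0 ≤ a → (∫ s in Set.Ioc a b, k s) ≤ h a := by
    intro a b ha
    rw [hh]
    exact setIntegral_mono_set (hkIoi a ha) (hknn a ha)
      (HasSubset.Subset.eventuallyLE Ioc_subset_Ioi_self)
  have hhanti : ∀ a b : ℝ, 0 ≤ a → a ≤ b → h b ≤ h a := by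
    intro a b ha hab
    rw [hh, hh]
    exact setIntegral_mono_set (hkIoi a ha) (hknn a ha)
      (HasSubset.Subset.eventuallyLE (Ioi_subset_Ioi hab))
  have hRHS : 0 ≤ g 0 * h c + h 0 * g c := by
    have h1 := hg_nonneg 0 Set.self_mem_Ici
    have h2 := hg_nonneg c hc0
    have h3 := hhnn 0 le_rfl
    have h4 := hhnn c hc0
    positivity
  by_cases hI : IntervalIntegrable (fun s => g ((t - s) / 2 ^ n) * k s) volume 0 t
  · have hkint : ∀ a b : ℝ, 0 ≤ a → 0 ≤ b → IntervalIntegrable k volume a b := by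
      intro a b ha hb
      refine (hk_int.mono_set ?_).intervalIntegrable
      exact fun x hx => le_trans (le_min ha hb) hx.1
    have ht2 : (0:ℝ) ≤ t / 2 := by linarith
    have ht2t : t / 2 ≤ t := by linarith
    have hsub1 : Set.uIcc (0:ℝ) (t/2) ⊆ Set.uIcc (0:ℝ) t :=
      Set.uIcc_subset_uIcc Set.left_mem_uIcc
        (by rw [Set.uIcc_of_le ht]; exact ⟨ht2, ht2t⟩)
    have hsub2 : Set.uIcc (t/2) t ⊆ Set.uIcc (0:ℝ) t :=
      Set.uIcc_subset_uIcc (by rw [Set.uIcc_of_le ht]; exact ⟨ht2, ht2t⟩)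
        (by rw [Set.uIcc_of_le ht]; exact ⟨ht, le_rfl⟩)
    have hI1 := hI.mono_set hsub1
    have hI2 := hI.mono_set hsub2
    have hsplit := intervalIntegral.integral_add_adjacent_intervals hI1 hI2
    have hb1 : (∫ s in (0:ℝ)..(t/2), g ((t - s) / 2 ^ n) * k s) ≤ g c * h 0 := by
      have hmono : ∀ s ∈ Set.Icc (0:ℝ) (t/2), g ((t - s) / 2 ^ n) * k s ≤ g c * k s := by
        intro s hs
        have hks := hk_nonneg s hs.1
        have hts : 0 ≤ t - s := by have := hs.2; linarith
        have harg0 : (0:ℝ) ≤ (t - s) / 2 ^ n := by positivity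
        have hcarg : c ≤ (t - s) / 2 ^ n := by
          have hq : c = (t / 2) / 2 ^ n := by rw [hc, pow_succ]; ring
          rw [hq]
          gcongr
          linarith [hs.2]
        exact mul_le_mul_of_nonneg_right (hg_anti hc0 harg0 hcarg) hks
      calc (∫ s in (0:ℝ)..(t/2), g ((t - s) / 2 ^ n) * k s)
          ≤ ∫ s in (0:ℝ)..(t/2), g c * k s :=
            intervalIntegral.integral_mono_on ht2 hI1
              ((hkint 0 (t/2) le_rfl ht2).const_mul (g c)) hmono
        _ = g c * ∫ s in (0:ℝ)..(t/2), k s := intervalIntegral.integral_const_mul _ _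
        _ ≤ g c * h 0 := by
            refine mul_le_mul_of_nonneg_left ?_ (hg_nonneg c hc0)
            rw [intervalIntegral.integral_of_le ht2]
            exact hIocle 0 (t/2) le_rfl
    have hb2 : (∫ s in (t/2)..t, g ((t - s) / 2 ^ n) * k s) ≤ g 0 * h c := by
      have hmono : ∀ s ∈ Set.Icc (t/2) t, g ((t - s) / 2 ^ n) * k s ≤ g 0 * k s := by
        intro s hs
        have hks := hk_nonneg s (ht2.trans hs.1)
        have hts : 0 ≤ t - s := by have := hs.2; linarith
        have harg0 : (0:ℝ) ≤ (t - s) / 2 ^ n := by positivity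
        exact mul_le_mul_of_nonneg_right (hg_anti Set.self_mem_Ici harg0 harg0) hks
      calc (∫ s in (t/2)..t, g ((t - s) / 2 ^ n) * k s)
          ≤ ∫ s in (t/2)..t, g 0 * k s :=
            intervalIntegral.integral_mono_on ht2t hI2
              ((hkint (t/2) t ht2 ht).const_mul (g 0)) hmono
        _ = g 0 * ∫ s in (t/2)..t, k s := intervalIntegral.integral_const_mul _ _
        _ ≤ g 0 * h c := by
            refine mul_le_mul_of_nonneg_left ?_ (hg_nonneg 0 Set.self_mem_Ici)
            rw [intervalIntegral.integral_of_le ht2t]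
            exact (hIocle (t/2) t ht2).trans (hhanti c (t/2) hc0 hct)
    linarith
  · rw [intervalIntegral.integral_undef hI]
    exact hRHS
end

section
/- Let k be a nonnegative integrable function on [0,∞) and h(t) = ∫_t^∞ k(s) ds. Then for every nonnegative integer n and t ≥ 0, ∫_0^t h((t−s)/2^n) k(s) ds ≤ 2 h(0) h(t/2^(n+1)). -/
open MeasureTheory Set Filter

theorem gronwall_part_i_h (k h : ℝ → ℝ)
    (hk_nonneg : ∀ t ∈ Ici (0:ℝ), 0 ≤ k t)
    (hk_int : IntegrableOn k (Ici 0))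
    (hh : ∀ t, h t = ∫ s in Ioi t, k s)
    (n : ℕ) (t : ℝ) (ht : 0 ≤ t) :
    ∫ s in (0:ℝ)..t, h ((t - s) / 2 ^ n) * k s
      ≤ 2 * h 0 * h (t / 2 ^ (n + 1)) := by
  have hsub : ∀ a : ℝ, 0 ≤ a → Ioi a ⊆ Ici (0:ℝ) := fun a ha x hx => le_trans ha (le_of_lt hx)
  have h_nonneg : ∀ a : ℝ, 0 ≤ a → 0 ≤ h a := by
    intro a ha
    rw [hh]
    exact setIntegral_nonneg measurableSet_Ioi (fun x hx => hk_nonneg x (hsub a ha hx))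
  have hdecomp : ∀ a b : ℝ, 0 ≤ a → a ≤ b → h a = (∫ s in Ioc a b, k s) + h b := by
    intro a b ha hab
    rw [hh, hh, ← setIntegral_union (Ioc_disjoint_Ioi le_rfl) measurableSet_Ioi
      (hk_int.mono_set (fun x hx => le_trans ha (le_of_lt hx.1)))
      (hk_int.mono_set (hsub b (ha.trans hab))), Ioc_union_Ioi_eq_Ioi hab]
  have h_anti : ∀ a b : ℝ, 0 ≤ a → a ≤ b → h b ≤ h a := by
    intro a b ha hab
    have h1 : 0 ≤ ∫ s in Ioc a b, k s :=
      setIntegral_nonneg measurableSet_Ioc (fun x hx => hk_nonneg x (le_trans ha (le_of_lt hx.1)))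
    have h2 := hdecomp a b ha hab
    linarith
  have hIoc_le : ∀ a b : ℝ, 0 ≤ a → a ≤ b → (∫ s in Ioc a b, k s) ≤ h a := by
    intro a b ha hab
    have h1 := hdecomp a b ha hab
    have h2 := h_nonneg b (ha.trans hab)
    linarith
  have hkI : ∀ a b : ℝ, 0 ≤ a → a ≤ b → IntervalIntegrable k volume a b := by
    intro a b ha hab
    rw [intervalIntegrable_iff_integrableOn_Ioc_of_le hab]
    exact hk_int.mono_set (fun x hx => le_trans ha hx.1.le)
  have h2n : (0:ℝ) < 2 ^ n := by positivity
  have hc0 : (0:ℝ) ≤ t / 2 ^ (n + 1) := by positivity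
  have ht2 : (0:ℝ) ≤ t / 2 := by linarith
  have ht2t : t / 2 ≤ t := by linarith
  have hct2 : t / 2 ^ (n + 1) ≤ t / 2 := by
    have h2le : (2:ℝ) ≤ 2 ^ (n + 1) :=
      le_trans (by norm_num) (pow_le_pow_right₀ (by norm_num) (by omega : 1 ≤ n + 1))
    gcongr <;> first | exact ht | norm_num | exact h2le
  have hh0 : 0 ≤ h 0 := h_nonneg 0 le_rfl
  have hhc : 0 ≤ h (t / 2 ^ (n + 1)) := h_nonneg _ hc0
  by_cases hint : IntervalIntegrable (fun s => h ((t - s) / 2 ^ n) * k s) volume 0 t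
  · have h1 : IntervalIntegrable (fun s => h ((t - s) / 2 ^ n) * k s) volume 0 (t / 2) :=
      hint.mono_set (by
        rw [uIcc_of_le ht2, uIcc_of_le ht]
        exact Icc_subset_Icc le_rfl ht2t)
    have h2 : IntervalIntegrable (fun s => h ((t - s) / 2 ^ n) * k s) volume (t / 2) t :=
      hint.mono_set (by
        rw [uIcc_of_le ht2t, uIcc_of_le ht]
        exact Icc_subset_Icc ht2 le_rfl)
    rw [← intervalIntegral.integral_add_adjacent_intervals h1 h2]
    have bound1 : (∫ s in (0:ℝ)..(t / 2), h ((t - s) / 2 ^ n) * k s)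
        ≤ h (t / 2 ^ (n + 1)) * h 0 := by
      have step : (∫ s in (0:ℝ)..(t / 2), h ((t - s) / 2 ^ n) * k s)
          ≤ ∫ s in (0:ℝ)..(t / 2), h (t / 2 ^ (n + 1)) * k s := by
        apply intervalIntegral.integral_mono_on ht2 h1 ((hkI 0 (t / 2) le_rfl ht2).const_mul _)
        intro x hx
        have hx0 : 0 ≤ x := hx.1
        have hxle : x ≤ t / 2 := hx.2
        have harg : t / 2 ^ (n + 1) ≤ (t - x) / 2 ^ n := by
          rw [pow_succ]
          rw [div_le_div_iff₀ (by positivity) h2n]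
          nlinarith
        exact mul_le_mul_of_nonneg_right
          (h_anti _ _ hc0 harg) (hk_nonneg x hx0)
      rw [intervalIntegral.integral_const_mul] at step
      refine step.trans ?_
      apply mul_le_mul_of_nonneg_left _ hhc
      rw [intervalIntegral.integral_of_le ht2]
      exact hIoc_le 0 (t / 2) le_rfl ht2
    have bound2 : (∫ s in (t / 2)..t, h ((t - s) / 2 ^ n) * k s)
        ≤ h 0 * h (t / 2 ^ (n + 1)) := by
      have step : (∫ s in (t / 2)..t, h ((t - s) / 2 ^ n) * k s)
          ≤ ∫ s in (t / 2)..t, h 0 * k s := by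
        apply intervalIntegral.integral_mono_on ht2t h2 ((hkI (t / 2) t ht2 ht2t).const_mul _)
        intro x hx
        have hx0 : 0 ≤ x := le_trans ht2 hx.1
        have harg : (0:ℝ) ≤ (t - x) / 2 ^ n :=
          div_nonneg (by linarith [hx.2]) h2n.le
        exact mul_le_mul_of_nonneg_right (h_anti _ _ le_rfl harg) (hk_nonneg x hx0)
      rw [intervalIntegral.integral_const_mul] at step
      refine step.trans ?_
      apply mul_le_mul_of_nonneg_left _ hh0
      rw [intervalIntegral.integral_of_le ht2t]
      exact (hIoc_le (t / 2) t ht2 ht2t).trans (h_anti _ _ hc0 hct2)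
    linarith
  · rw [intervalIntegral.integral_undef hint]
    positivity
end

section
/- Let g be nonnegative, monotone decreasing on [0,∞) with g(0) < ∞, and k nonnegative integrable with tail h(t) = ∫_t^∞ k(s) ds. Then for every n ≥ 1 and t ≥ 0, the iterated integral ∫_{0<u_1<⋯<u_n<t} g(t−u_n) ∏_{i=1}^n k(u_i − u_{i−1}) du_1⋯du_n (with u_0 = 0) is bounded by (2^n − 1) g(0) h(0)^{n−1} h(t/2^n) + h(0)^n g(t/2^n). -/
/-!
In the increments `v i = u i - u (i - 1)` the simplex becomes `{v | 0 < v, ∑ v < t}` and the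
integrand becomes `g (t - ∑ v) * ∏ k (v i)`; the substitution is linear with determinant one.
Put `c = t / 2 ^ n`, so that `(n + 1) c ≤ t`. At each point of the new domain either
`∑ v ≤ t - c`, and then `g (t - ∑ v) ≤ g c`, or some `v i > c`, and then `g (t - ∑ v) ≤ g 0`.
Hence the integrand is dominated by a sum of products of `k` over `n + 1` orthants, which
integrate coordinatewise to `g c * h 0 ^ n + n * g 0 * h c * h 0 ^ (n - 1)`; finally
`n ≤ 2 ^ n - 1`.
-/

open MeasureTheory Set

section PartialSums

variable {ι : Type*} [LinearOrder ι] [LocallyFiniteOrderBot ι]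

def partialSums {M : Type*} [AddCommMonoid M] (v : ι → M) (i : ι) : M :=
  ∑ j ∈ Finset.Iic i, v j

theorem partialSums_eq_sum_of_forall_le [Fintype ι] {M : Type*} [AddCommMonoid M] (v : ι → M)
    {i : ι} (hi : ∀ j, j ≤ i) : partialSums v i = ∑ j, v j := by
  rw [partialSums, Finset.eq_univ_of_forall fun j => Finset.mem_Iic.mpr (hi j)]

theorem partialSums_eq_toLin' [Fintype ι] {R : Type*} [CommSemiring R] :
    (partialSums : (ι → R) → ι → R) =
      Matrix.toLin' (Matrix.of fun i j : ι => if j ≤ i then (1 : R) else 0) := by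
  ext v i
  simp only [partialSums, Matrix.toLin'_apply, Matrix.mulVec, dotProduct, Matrix.of_apply,
    ite_mul, one_mul, zero_mul]
  rw [← Finset.sum_filter]
  congr 1
  ext j
  simp

theorem measurePreserving_partialSums [Fintype ι] :
    MeasurePreserving (partialSums : (ι → ℝ) → ι → ℝ) := by
  classical
  have hdet : LinearMap.det
      (Matrix.toLin' (Matrix.of fun i j : ι => if j ≤ i then (1 : ℝ) else 0)) = 1 := by
    rw [LinearMap.det_toLin', Matrix.det_of_isLowerTriangular _ fun i j (hij : i < j) => by
      simp [hij.not_ge]]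
    simp
  rw [partialSums_eq_toLin']
  refine ⟨(LinearMap.continuous_on_pi _).measurable, ?_⟩
  rw [Real.map_linearMap_volume_pi_eq_smul_volume_pi (by rw [hdet]; norm_num), hdet]
  simp

end PartialSums

section Increments

variable {n : ℕ}

def increments {M : Type*} [AddCommGroup M] (u : Fin n → M) (i : Fin n) : M :=
  u i - if (i : ℕ) = 0 then 0 else u ⟨(i : ℕ) - 1, Nat.lt_of_le_of_lt (Nat.pred_le _) i.isLt⟩

theorem increments_partialSums {M : Type*} [AddCommGroup M] (v : Fin n → M) :
    increments (partialSums v) = v := by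
  ext i
  by_cases hi : (i : ℕ) = 0
  · have hIic : Finset.Iic i = {i} := by
      ext j
      simp [Fin.le_def, Fin.ext_iff, hi]
    simp [increments, partialSums, hi, hIic]
  · have hIic : Finset.Iic (⟨(i : ℕ) - 1, by omega⟩ : Fin n) = Finset.Iio i := by
      ext j
      simp only [Finset.mem_Iic, Finset.mem_Iio, Fin.le_def, Fin.lt_def]
      omega
    rw [increments, if_neg hi, partialSums, partialSums, hIic, ← Finset.Iio_insert,
      Finset.sum_insert Finset.notMem_Iio_self, add_sub_cancel_right]

theorem measurableEmbedding_partialSums :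
    MeasurableEmbedding (partialSums : (Fin n → ℝ) → Fin n → ℝ) := by
  rw [partialSums_eq_toLin']
  refine (LinearMap.isClosedEmbedding_of_injective
    (LinearMap.ker_eq_bot.mpr ?_)).measurableEmbedding
  rw [← partialSums_eq_toLin']
  exact Function.LeftInverse.injective (g := increments) increments_partialSums

theorem increments_pos {u : Fin n → ℝ} (hpos : ∀ i, 0 < u i) (hmono : StrictMono u)
    (i : Fin n) : 0 < increments u i := by
  rw [increments]
  split_ifs with hi
  · simpa using hpos i
  · exact sub_pos.mpr (hmono (Fin.lt_def.mpr (by simp; omega)))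

def orderedSimplex (n : ℕ) (t : ℝ) : Set (Fin n → ℝ) :=
  {u | (∀ i, 0 < u i ∧ u i < t) ∧ ∀ i j : Fin n, i < j → u i < u j}

theorem measurableSet_orderedSimplex (t : ℝ) : MeasurableSet (orderedSimplex n t) := by
  unfold orderedSimplex
  measurability

theorem preimage_partialSums_orderedSimplex_subset (hn : 0 < n) (t : ℝ) :
    partialSums ⁻¹' orderedSimplex n t ⊆ {v | (∀ i, 0 < v i) ∧ ∑ i, v i < t} := by
  rintro v ⟨hbound, hmono⟩
  refine ⟨fun i => ?_, ?_⟩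
  · rw [← increments_partialSums v]
    exact increments_pos (fun i => (hbound i).1) hmono i
  · rw [← partialSums_eq_sum_of_forall_le v (i := ⟨n - 1, by omega⟩) fun j =>
      Fin.le_def.mpr (Nat.le_sub_one_of_lt j.isLt)]
    exact (hbound _).2

end Increments

section OrthantProd

variable {ι : Type*} [Fintype ι]

noncomputable def orthantProd (k : ℝ → ℝ) (a v : ι → ℝ) : ℝ :=
  ∏ j, (Ioi (a j)).indicator k (v j)

theorem orthantProd_eq_prod (k : ℝ → ℝ) {a v : ι → ℝ} (hav : ∀ j, a j < v j) :
    orthantProd k a v = ∏ j, k (v j) :=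
  Finset.prod_congr rfl fun j _ => indicator_of_mem (hav j) k

theorem orthantProd_nonneg {k : ℝ → ℝ} (hk : ∀ x ∈ Ici (0 : ℝ), 0 ≤ k x) {a : ι → ℝ}
    (ha : 0 ≤ a) (v : ι → ℝ) : 0 ≤ orthantProd k a v :=
  Finset.prod_nonneg fun j _ =>
    indicator_nonneg (fun x hx => hk x (mem_Ici.mpr ((ha j).trans (le_of_lt hx)))) _

theorem integrable_orthantProd {k : ℝ → ℝ} (hk : IntegrableOn k (Ici 0)) {a : ι → ℝ}
    (ha : 0 ≤ a) : Integrable (orthantProd k a) :=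
  Integrable.fintype_prod (f := fun j => (Ioi (a j)).indicator k) fun j =>
    (hk.mono_set (Ioi_subset_Ici (ha j))).integrable_indicator measurableSet_Ioi

theorem integral_orthantProd (k : ℝ → ℝ) (a : ι → ℝ) :
    ∫ v, orthantProd k a v = ∏ j, ∫ x in Ioi (a j), k x := by
  simp only [orthantProd]
  rw [integral_fintype_prod_volume_eq_prod (fun j => (Ioi (a j)).indicator k)]
  exact Finset.prod_congr rfl fun j _ => integral_indicator measurableSet_Ioi

theorem sum_le_or_exists_lt (v : ι → ℝ) {c t : ℝ} (hct : (Fintype.card ι + 1) * c ≤ t) :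
    ∑ i, v i ≤ t - c ∨ ∃ i, c < v i := by
  by_contra! h
  have : ∑ i, v i ≤ Fintype.card ι * c := by
    simpa using Finset.sum_le_card_nsmul Finset.univ v c fun i _ => h.2 i
  linarith [h.1]

theorem prod_apply_single [DecidableEq ι] {M N : Type*} [Zero M] [CommMonoid N] (f : M → N)
    (i : ι) (c : M) :
    ∏ j, f ((Pi.single i c : ι → M) j) = f c * f 0 ^ (Fintype.card ι - 1) := by
  rw [Fintype.prod_eq_mul_prod_compl i, Pi.single_eq_same,
    Finset.prod_congr rfl fun j hj => by rw [Pi.single_eq_of_ne (by simpa using hj)],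
    Finset.prod_const, Finset.card_compl, Finset.card_singleton]

variable [DecidableEq ι] {g k : ℝ → ℝ}

theorem mul_prod_le_orthantProd (hg_nonneg : ∀ t ∈ Ici (0:ℝ), 0 ≤ g t)
    (hg_anti : AntitoneOn g (Ici 0)) (hk_nonneg : ∀ t ∈ Ici (0:ℝ), 0 ≤ k t) {c t : ℝ}
    (hc : 0 ≤ c) (hct : (Fintype.card ι + 1) * c ≤ t) {v : ι → ℝ} (hv : ∀ i, 0 < v i)
    (hvt : ∑ i, v i < t) :
    g (t - ∑ i, v i) * ∏ i, k (v i) ≤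
      g c * orthantProd k 0 v + ∑ i, g 0 * orthantProd k (Pi.single i c) v := by
  have hg0 : 0 ≤ g 0 := hg_nonneg 0 (mem_Ici.mpr le_rfl)
  have hcorner : ∀ i, 0 ≤ g 0 * orthantProd k (Pi.single i c) v := fun i =>
    mul_nonneg hg0 (orthantProd_nonneg hk_nonneg (Pi.single_nonneg.mpr hc) v)
  have hprod_nonneg : 0 ≤ ∏ i, k (v i) :=
    Finset.prod_nonneg fun i _ => hk_nonneg _ (mem_Ici.mpr (hv i).le)
  rcases sum_le_or_exists_lt v hct with hsum | ⟨i, hi⟩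
  · have hgc : g (t - ∑ i, v i) ≤ g c :=
      hg_anti (mem_Ici.mpr hc) (mem_Ici.mpr (by linarith)) (by linarith)
    calc g (t - ∑ i, v i) * ∏ i, k (v i) ≤ g c * orthantProd k 0 v := by
          rw [orthantProd_eq_prod k (a := 0) hv]
          exact mul_le_mul_of_nonneg_right hgc hprod_nonneg
      _ ≤ _ := le_add_of_nonneg_right (Finset.sum_nonneg fun i _ => hcorner i)
  · have hg : g (t - ∑ i, v i) ≤ g 0 :=
      hg_anti (mem_Ici.mpr le_rfl) (mem_Ici.mpr (by linarith)) (by linarith)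
    have hcorner_lt : ∀ j, (Pi.single i c : ι → ℝ) j < v j := fun j => by
      rcases eq_or_ne j i with rfl | hj
      · simpa using hi
      · simpa [hj] using hv j
    calc g (t - ∑ i, v i) * ∏ i, k (v i) ≤ g 0 * orthantProd k (Pi.single i c) v := by
          rw [orthantProd_eq_prod k hcorner_lt]
          exact mul_le_mul_of_nonneg_right hg hprod_nonneg
      _ ≤ ∑ i, g 0 * orthantProd k (Pi.single i c) v :=
          Finset.single_le_sum (fun j _ => hcorner j) (Finset.mem_univ i)
      _ ≤ _ := le_add_of_nonneg_left
          (mul_nonneg (hg_nonneg c (mem_Ici.mpr hc)) (orthantProd_nonneg hk_nonneg le_rfl v))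

theorem setIntegral_mul_prod_le {h : ℝ → ℝ} (hg_nonneg : ∀ t ∈ Ici (0:ℝ), 0 ≤ g t)
    (hg_anti : AntitoneOn g (Ici 0)) (hk_nonneg : ∀ t ∈ Ici (0:ℝ), 0 ≤ k t)
    (hk_int : IntegrableOn k (Ici 0)) (hh : ∀ t, h t = ∫ s in Ioi t, k s) {c t : ℝ}
    (hc : 0 ≤ c) (hct : (Fintype.card ι + 1) * c ≤ t) {s : Set (ι → ℝ)} (hs : MeasurableSet s)
    (hsub : s ⊆ {v | (∀ i, 0 < v i) ∧ ∑ i, v i < t}) :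
    ∫ v in s, g (t - ∑ i, v i) * ∏ i, k (v i) ≤
      g c * h 0 ^ Fintype.card ι +
        Fintype.card ι * (g 0 * (h c * h 0 ^ (Fintype.card ι - 1))) := by
  have hg0 : 0 ≤ g 0 := hg_nonneg 0 (mem_Ici.mpr le_rfl)
  have hsingle : ∀ i, 0 ≤ (Pi.single i c : ι → ℝ) := fun i => Pi.single_nonneg.mpr hc
  have horigin_int := (integrable_orthantProd (ι := ι) hk_int le_rfl).const_mul (g c)
  have hcorner_int : ∀ i ∈ Finset.univ,
      Integrable fun v : ι → ℝ => g 0 * orthantProd k (Pi.single i c) v :=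
    fun i _ => (integrable_orthantProd hk_int (hsingle i)).const_mul (g 0)
  have hD_int := horigin_int.add (integrable_finsetSum _ hcorner_int)
  have hD_nonneg :
      ∀ v, 0 ≤ g c * orthantProd k 0 v + ∑ i, g 0 * orthantProd k (Pi.single i c) v :=
    fun v => add_nonneg (mul_nonneg (hg_nonneg c hc) (orthantProd_nonneg hk_nonneg le_rfl v))
      (Finset.sum_nonneg fun i _ => mul_nonneg hg0 (orthantProd_nonneg hk_nonneg (hsingle i) v))
  calc ∫ v in s, g (t - ∑ i, v i) * ∏ i, k (v i)
      ≤ ∫ v in s, g c * orthantProd k 0 v + ∑ i, g 0 * orthantProd k (Pi.single i c) v := by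
        refine integral_mono_of_nonneg (ae_restrict_of_forall_mem hs fun v hv => ?_)
          hD_int.integrableOn (ae_restrict_of_forall_mem hs fun v hv => ?_)
        · obtain ⟨hv, hvt⟩ := hsub hv
          exact mul_nonneg (hg_nonneg _ (mem_Ici.mpr (by linarith)))
            (Finset.prod_nonneg fun i _ => hk_nonneg _ (hv i).le)
        · obtain ⟨hv, hvt⟩ := hsub hv
          exact mul_prod_le_orthantProd hg_nonneg hg_anti hk_nonneg hc hct hv hvt
    _ ≤ ∫ v, g c * orthantProd k 0 v + ∑ i, g 0 * orthantProd k (Pi.single i c) v :=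
        setIntegral_le_integral hD_int (ae_of_all _ hD_nonneg)
    _ = _ := by
        rw [integral_add horigin_int (integrable_finsetSum _ hcorner_int),
          integral_finsetSum _ hcorner_int]
        simp only [integral_const_mul, integral_orthantProd, ← hh, Pi.zero_apply,
          prod_apply_single, Finset.prod_const, Finset.card_univ, Finset.sum_const, nsmul_eq_mul]

end OrthantProd

theorem gronwall_part_ii (g k h : ℝ → ℝ)
    (hg_nonneg : ∀ t ∈ Ici (0:ℝ), 0 ≤ g t)
    (hg_anti : AntitoneOn g (Ici 0))
    (hk_nonneg : ∀ t ∈ Ici (0:ℝ), 0 ≤ k t)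
    (hk_int : IntegrableOn k (Ici 0))
    (hh : ∀ t, h t = ∫ s in Ioi t, k s)
    (n : ℕ) (hn : 1 ≤ n) (t : ℝ) (ht : 0 ≤ t) :
    (∫ u in {u : Fin n → ℝ | (∀ i, 0 < u i ∧ u i < t) ∧
        ∀ i j : Fin n, i < j → u i < u j},
      g (t - u ⟨n - 1, by omega⟩) *
        ∏ i : Fin n, k (u i -
          if (i : ℕ) = 0 then 0
          else u ⟨(i : ℕ) - 1, Nat.lt_of_le_of_lt (Nat.pred_le _) i.isLt⟩))
      ≤ (2 ^ n - 1) * g 0 * h 0 ^ (n - 1) * h (t / 2 ^ n)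
          + h 0 ^ n * g (t / 2 ^ n) := by
  set c := t / 2 ^ n
  have hc : 0 ≤ c := by positivity
  have h2n : (n : ℝ) + 1 ≤ 2 ^ n := by exact_mod_cast Nat.lt_two_pow_self
  have hct : (Fintype.card (Fin n) + 1) * c ≤ t := by
    rw [Fintype.card_fin, mul_div_assoc', div_le_iff₀ (by positivity)]
    nlinarith
  have htail_nonneg : ∀ x, 0 ≤ x → 0 ≤ h x := fun x hx => (hh x).symm ▸
    setIntegral_nonneg measurableSet_Ioi fun y hy => hk_nonneg y (mem_Ici.mpr (hx.trans hy.le))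
  have hlast : ∀ v : Fin n → ℝ, partialSums v ⟨n - 1, by omega⟩ = ∑ i, v i := fun v =>
    partialSums_eq_sum_of_forall_le v fun j => Fin.le_def.mpr (Nat.le_sub_one_of_lt j.isLt)
  calc ∫ u in orderedSimplex n t, g (t - u ⟨n - 1, by omega⟩) * ∏ i, k (increments u i)
      = ∫ v in partialSums ⁻¹' orderedSimplex n t, g (t - ∑ i, v i) * ∏ i, k (v i) := by
        rw [← measurePreserving_partialSums.setIntegral_preimage_emb
          measurableEmbedding_partialSums]
        simp only [hlast, increments_partialSums]
    _ ≤ g c * h 0 ^ n + n * (g 0 * (h c * h 0 ^ (n - 1))) := by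
        simpa using setIntegral_mul_prod_le hg_nonneg hg_anti hk_nonneg hk_int hh hc hct
          (measurePreserving_partialSums.measurable (measurableSet_orderedSimplex t))
          (preimage_partialSums_orderedSimplex_subset hn t)
    _ ≤ (2 ^ n - 1) * g 0 * h 0 ^ (n - 1) * h c + h 0 ^ n * g c := by
        have := mul_nonneg (hg_nonneg 0 (mem_Ici.mpr le_rfl))
          (mul_nonneg (htail_nonneg c hc) (pow_nonneg (htail_nonneg 0 le_rfl) (n - 1)))
        nlinarith
end

section
/- The function ρ̃(x) = (1 + |x|^a)^{−1} on ℝ^d with a > d is an admissible weight: it is strictly positive, bounded, continuous, integrable, and for each T > 0 there is C(T) with (p(t,·)*ρ̃)(x) ≤ C(T) ρ̃(x) for all t ∈ [0,T], x ∈ ℝ^d. -/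
/-!
Integrability of `ρ̃` follows from `ρ̃(x) ≤ 2^a (1 + |x|)^{-a}` and `a > d`. For the heat-kernel
bound, Peetre's inequality `1 + |x|^a ≤ 2^a (1 + |x - y|^a) (1 + |y|^a)` gives
`(p(t,·) * ρ̃)(x) ≤ 2^a ρ̃(x) ∫ p(t,z) (1 + |z|^a) dz`, and the moment is absorbed by doubling
the variance: `|z|^a e^{-|z|²/2t} ≤ ⌈a/2⌉! (4t)^{a/2} e^{-|z|²/4t}`, so that
`p(t,z) (1 + |z|^a) ≤ 2^{d/2} (1 + ⌈a/2⌉! (4t)^{a/2}) p(2t,z)`. Since `p(2t,·)` has unit mass,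
the resulting constant is increasing in `t`, hence bounded on `(0, T]`.
-/

open MeasureTheory Set Real Module Nat

namespace Real

lemma add_rpow_le_two_rpow_mul_rpow_add_rpow {p x y : ℝ} (hx : 0 ≤ x) (hy : 0 ≤ y)
    (hp : 0 ≤ p) : (x + y) ^ p ≤ 2 ^ p * (x ^ p + y ^ p) := calc
  (x + y) ^ p ≤ (2 * max x y) ^ p := by
    rw [two_mul]; gcongr; exacts [le_max_left x y, le_max_right x y]
  _ = 2 ^ p * max x y ^ p := mul_rpow zero_le_two (le_max_of_le_left hx)
  _ = 2 ^ p * max (x ^ p) (y ^ p) := by rw [rpow_max hx hy hp]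
  _ ≤ 2 ^ p * (x ^ p + y ^ p) := by
    gcongr; exact max_le_add_of_nonneg (rpow_nonneg hx p) (rpow_nonneg hy p)

lemma rpow_le_factorial_mul_exp {c u : ℝ} (hc : 0 ≤ c) (hu : 0 ≤ u) :
    u ^ c ≤ (⌈c⌉₊)! * exp u := by
  have hfac : (1 : ℝ) ≤ (⌈c⌉₊)! := Nat.one_le_cast.2 (factorial_pos _)
  rcases le_or_gt u 1 with hu1 | hu1
  · calc u ^ c ≤ 1 := rpow_le_one hu hu1 hc
      _ ≤ (⌈c⌉₊)! * exp u := one_le_mul_of_one_le_of_one_le hfac (one_le_exp hu)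
  · calc u ^ c ≤ u ^ ⌈c⌉₊ := by
          simpa only [rpow_natCast] using rpow_le_rpow_of_exponent_le hu1.le (le_ceil c)
      _ ≤ (⌈c⌉₊)! * exp u := by
          rw [← div_le_iff₀' (by positivity)]; exact Real.pow_div_factorial_le_exp u hu _

lemma rpow_mul_exp_neg_sq_div_le {a s t : ℝ} (ha : 0 ≤ a) (hs : 0 ≤ s) (ht : 0 < t) :
    s ^ a * exp (-s ^ 2 / (2 * t)) ≤
      (⌈a / 2⌉₊)! * (4 * t) ^ (a / 2) * exp (-s ^ 2 / (4 * t)) := by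
  set u := s ^ 2 / (4 * t)
  have hu : 0 ≤ u := by positivity
  have hsa : s ^ a = (4 * t) ^ (a / 2) * u ^ (a / 2) := by
    rw [← mul_rpow (by positivity) hu, mul_div_cancel₀ _ (by positivity), ← rpow_natCast,
      ← rpow_mul hs]
    congr 1; ring
  have hexp : exp (-s ^ 2 / (2 * t)) = exp (-s ^ 2 / (4 * t)) * exp (-u) := by
    rw [← exp_add]; congr 1; simp only [u]; field_simp; ring
  have hmoment : u ^ (a / 2) * exp (-u) ≤ (⌈a / 2⌉₊)! := by
    rw [← le_div_iff₀ (exp_pos _), exp_neg, div_inv_eq_mul]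
    exact rpow_le_factorial_mul_exp (by positivity) hu
  calc s ^ a * exp (-s ^ 2 / (2 * t))
      = (4 * t) ^ (a / 2) * (u ^ (a / 2) * exp (-u)) * exp (-s ^ 2 / (4 * t)) := by
        rw [hsa, hexp]; ring
    _ ≤ (4 * t) ^ (a / 2) * (⌈a / 2⌉₊)! * exp (-s ^ 2 / (4 * t)) := by gcongr
    _ = _ := by ring

end Real

section Weight

variable {E : Type*} [SeminormedAddCommGroup E] {a : ℝ}

lemma one_add_norm_rpow_pos (a : ℝ) (x : E) : 0 < 1 + ‖x‖ ^ a := by positivity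

lemma one_add_norm_add_rpow_le (ha : 0 ≤ a) (x y : E) :
    1 + ‖x + y‖ ^ a ≤ 2 ^ a * (1 + ‖x‖ ^ a) * (1 + ‖y‖ ^ a) := by
  have hxy : ‖x + y‖ ^ a ≤ 2 ^ a * (‖x‖ ^ a + ‖y‖ ^ a) :=
    (rpow_le_rpow (norm_nonneg _) (norm_add_le x y) ha).trans
      (add_rpow_le_two_rpow_mul_rpow_add_rpow (norm_nonneg x) (norm_nonneg y) ha)
  have h2 : (1 : ℝ) ≤ 2 ^ a := one_le_rpow one_le_two ha
  have hx : 0 ≤ ‖x‖ ^ a := by positivity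
  have hy : 0 ≤ ‖y‖ ^ a := by positivity
  nlinarith [mul_nonneg hx hy]

lemma inv_one_add_norm_rpow_le (ha : 0 ≤ a) (x y : E) :
    (1 + ‖y‖ ^ a)⁻¹ ≤ 2 ^ a * (1 + ‖x - y‖ ^ a) * (1 + ‖x‖ ^ a)⁻¹ := by
  rw [← div_eq_mul_inv, le_div_iff₀ (one_add_norm_rpow_pos a x),
    inv_mul_le_iff₀ (one_add_norm_rpow_pos a y)]
  have h := one_add_norm_add_rpow_le ha (x - y) y
  rw [sub_add_cancel] at h
  linarith

lemma continuous_inv_one_add_norm_rpow (ha : 0 ≤ a) :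
    Continuous fun x : E => (1 + ‖x‖ ^ a)⁻¹ :=
  (continuous_const.add (continuous_norm.rpow_const fun _ => Or.inr ha)).inv₀
    fun x => (one_add_norm_rpow_pos a x).ne'

end Weight

lemma integrable_inv_one_add_norm_rpow {E : Type*} [NormedAddCommGroup E] [NormedSpace ℝ E]
    [FiniteDimensional ℝ E] [MeasurableSpace E] [BorelSpace E] (μ : Measure E)
    [μ.IsAddHaarMeasure] {a : ℝ} (ha : (finrank ℝ E : ℝ) < a) :
    Integrable (fun x : E => (1 + ‖x‖ ^ a)⁻¹) μ := by
  have ha0 : 0 ≤ a := (Nat.cast_nonneg _).trans ha.le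
  refine ((integrable_one_add_norm ha).const_mul (2 ^ a)).mono'
    (continuous_inv_one_add_norm_rpow ha0).aestronglyMeasurable (.of_forall fun x => ?_)
  have h1x : 0 < 1 + ‖x‖ := by positivity
  have hle : (1 + ‖x‖) ^ a ≤ 2 ^ a * (1 + ‖x‖ ^ a) := by
    simpa using add_rpow_le_two_rpow_mul_rpow_add_rpow zero_le_one (norm_nonneg x) ha0
  rw [norm_inv, Real.norm_of_nonneg (one_add_norm_rpow_pos a x).le, rpow_neg h1x.le,
    ← div_eq_mul_inv, le_div_iff₀ (by positivity),
    inv_mul_le_iff₀ (one_add_norm_rpow_pos a x)]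
  rwa [mul_comm]

section HeatKernel

variable {V : Type*} [NormedAddCommGroup V] [InnerProductSpace ℝ V]

noncomputable def heatKernel (t : ℝ) (x : V) : ℝ :=
  (2 * π * t) ^ (-(finrank ℝ V : ℝ) / 2) * exp (-‖x‖ ^ 2 / (2 * t))

lemma heatKernel_nonneg {t : ℝ} (ht : 0 ≤ t) (x : V) : 0 ≤ heatKernel t x := by
  unfold heatKernel; positivity

lemma heatKernel_mul_one_add_rpow_le {a t : ℝ} (ha : 0 ≤ a) (ht : 0 < t) (x : V) :
    heatKernel t x * (1 + ‖x‖ ^ a) ≤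
      2 ^ (finrank ℝ V / 2 : ℝ) * (1 + (⌈a / 2⌉₊)! * (4 * t) ^ (a / 2)) *
        heatKernel (2 * t) x := by
  have hscale : (2 * π * t) ^ (-(finrank ℝ V : ℝ) / 2) =
      2 ^ (finrank ℝ V / 2 : ℝ) * (2 * π * (2 * t)) ^ (-(finrank ℝ V : ℝ) / 2) := by
    rw [show 2 * π * (2 * t) = 2 * (2 * π * t) by ring, mul_rpow zero_le_two (by positivity),
      ← mul_assoc, ← rpow_add zero_lt_two, neg_div, add_neg_cancel, rpow_zero, one_mul]
  have hexp : exp (-‖x‖ ^ 2 / (2 * t)) ≤ exp (-‖x‖ ^ 2 / (2 * (2 * t))) := by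
    rw [exp_le_exp, neg_div, neg_div, neg_le_neg_iff]
    gcongr
    linarith
  have hmoment : ‖x‖ ^ a * exp (-‖x‖ ^ 2 / (2 * t)) ≤
      (⌈a / 2⌉₊)! * (4 * t) ^ (a / 2) * exp (-‖x‖ ^ 2 / (2 * (2 * t))) := by
    rw [show 2 * (2 * t) = 4 * t by ring]
    exact rpow_mul_exp_neg_sq_div_le ha (norm_nonneg x) ht
  unfold heatKernel
  rw [hscale]
  calc _ = 2 ^ (finrank ℝ V / 2 : ℝ) * (2 * π * (2 * t)) ^ (-(finrank ℝ V : ℝ) / 2) *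
        (exp (-‖x‖ ^ 2 / (2 * t)) + ‖x‖ ^ a * exp (-‖x‖ ^ 2 / (2 * t))) := by ring
    _ ≤ 2 ^ (finrank ℝ V / 2 : ℝ) * (2 * π * (2 * t)) ^ (-(finrank ℝ V : ℝ) / 2) *
        (exp (-‖x‖ ^ 2 / (2 * (2 * t))) +
          (⌈a / 2⌉₊)! * (4 * t) ^ (a / 2) * exp (-‖x‖ ^ 2 / (2 * (2 * t)))) := by
      gcongr
    _ = _ := by ring

variable [FiniteDimensional ℝ V] [MeasurableSpace V] [BorelSpace V]

lemma integral_heatKernel {t : ℝ} (ht : 0 < t) : ∫ x : V, heatKernel t x = 1 := by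
  have hgauss := GaussianFourier.integral_rexp_neg_mul_sq_norm (V := V) (b := 1 / (2 * t))
    (by positivity)
  have hb : π / (1 / (2 * t)) = 2 * π * t := by field_simp
  simp_rw [hb, neg_mul, one_div_mul_eq_div, ← neg_div] at hgauss
  unfold heatKernel
  rw [integral_const_mul, hgauss, ← rpow_add (by positivity), neg_div, neg_add_cancel, rpow_zero]

lemma integrable_heatKernel {t : ℝ} (ht : 0 < t) : Integrable (heatKernel t : V → ℝ) :=
  .of_integral_ne_zero (by rw [integral_heatKernel ht]; exact one_ne_zero)

lemma integral_heatKernel_sub_mul_inv_one_add_norm_rpow_le {a t : ℝ} (ha : 0 ≤ a) (ht : 0 < t)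
    (x : V) :
    ∫ y, heatKernel t (x - y) * (1 + ‖y‖ ^ a)⁻¹ ≤
      2 ^ a * 2 ^ (finrank ℝ V / 2 : ℝ) * (1 + (⌈a / 2⌉₊)! * (4 * t) ^ (a / 2)) *
        (1 + ‖x‖ ^ a)⁻¹ := by
  set C := 2 ^ a * 2 ^ (finrank ℝ V / 2 : ℝ) * (1 + (⌈a / 2⌉₊)! * (4 * t) ^ (a / 2))
  have hbound : ∀ y, heatKernel t (x - y) * (1 + ‖y‖ ^ a)⁻¹ ≤
      C * (1 + ‖x‖ ^ a)⁻¹ * heatKernel (2 * t) (x - y) := fun y => calc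
    _ ≤ heatKernel t (x - y) * (2 ^ a * (1 + ‖x - y‖ ^ a) * (1 + ‖x‖ ^ a)⁻¹) := by
      gcongr
      · exact heatKernel_nonneg ht.le _
      · exact inv_one_add_norm_rpow_le ha x y
    _ = 2 ^ a * (1 + ‖x‖ ^ a)⁻¹ * (heatKernel t (x - y) * (1 + ‖x - y‖ ^ a)) := by ring
    _ ≤ 2 ^ a * (1 + ‖x‖ ^ a)⁻¹ * (2 ^ (finrank ℝ V / 2 : ℝ) *
          (1 + (⌈a / 2⌉₊)! * (4 * t) ^ (a / 2)) * heatKernel (2 * t) (x - y)) :=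
      mul_le_mul_of_nonneg_left (heatKernel_mul_one_add_rpow_le ha ht (x - y)) (by positivity)
    _ = _ := by ring
  calc _ ≤ ∫ y, C * (1 + ‖x‖ ^ a)⁻¹ * heatKernel (2 * t) (x - y) :=
        integral_mono_of_nonneg
          (.of_forall fun y => mul_nonneg (heatKernel_nonneg ht.le _) (by positivity))
          (((integrable_heatKernel (by positivity)).comp_sub_left x).const_mul _)
          (.of_forall hbound)
    _ = C * (1 + ‖x‖ ^ a)⁻¹ := by
      rw [integral_const_mul, integral_sub_left_eq_self (heatKernel (2 * t)) volume x,
        integral_heatKernel (by positivity), mul_one]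

end HeatKernel

theorem poly_weight_admissible_general (d : ℕ) (a : ℝ) (ha : (d : ℝ) < a)
    (p : ℝ → EuclideanSpace ℝ (Fin d) → ℝ)
    (hp : ∀ t x, p t x = (2 * Real.pi * t) ^ (-(d : ℝ) / 2) *
      Real.exp (-‖x‖ ^ 2 / (2 * t)))
    (ρ : EuclideanSpace ℝ (Fin d) → ℝ)
    (hρ : ∀ x, ρ x = (1 + ‖x‖ ^ a)⁻¹) :
    (∀ x, 0 < ρ x) ∧ (∃ M : ℝ, ∀ x, ρ x ≤ M) ∧ Continuous ρ ∧ Integrable ρ ∧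
      ∀ T > (0:ℝ), ∃ C : ℝ, ∀ t ∈ Ioc (0:ℝ) T, ∀ x,
        (∫ y, p t (x - y) * ρ y) ≤ C * ρ x := by
  have ha' : (finrank ℝ (EuclideanSpace ℝ (Fin d)) : ℝ) < a := by
    rwa [finrank_euclideanSpace_fin]
  have ha0 : 0 ≤ a := (Nat.cast_nonneg d).trans ha.le
  obtain rfl : p = heatKernel := by
    funext t x; rw [hp, heatKernel, finrank_euclideanSpace_fin]
  obtain rfl : ρ = fun x => (1 + ‖x‖ ^ a)⁻¹ := funext hρ
  refine ⟨fun x => inv_pos.2 (one_add_norm_rpow_pos a x),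
    ⟨1, fun x => inv_le_one_of_one_le₀ (le_add_of_nonneg_right (by positivity))⟩,
    continuous_inv_one_add_norm_rpow ha0, integrable_inv_one_add_norm_rpow volume ha', ?_⟩
  intro T _
  refine ⟨2 ^ a * 2 ^ (d / 2 : ℝ) * (1 + (⌈a / 2⌉₊)! * (4 * T) ^ (a / 2)),
    fun t ⟨ht, htT⟩ x => ?_⟩
  calc _ ≤ _ := integral_heatKernel_sub_mul_inv_one_add_norm_rpow_le ha0 ht x
    _ ≤ _ := by rw [finrank_euclideanSpace_fin]; gcongr

theorem poly_weight_admissible (d : ℕ) (hd : 1 ≤ d) (a : ℝ) (ha : (d : ℝ) < a)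
    (p : ℝ → EuclideanSpace ℝ (Fin d) → ℝ)
    (hp : ∀ t x, p t x = (2 * Real.pi * t) ^ (-(d : ℝ) / 2) *
      Real.exp (-‖x‖ ^ 2 / (2 * t)))
    (ρ : EuclideanSpace ℝ (Fin d) → ℝ)
    (hρ : ∀ x, ρ x = (1 + ‖x‖ ^ a)⁻¹) :
    (∀ x, 0 < ρ x) ∧ (∃ M : ℝ, ∀ x, ρ x ≤ M) ∧ Continuous ρ ∧ Integrable ρ ∧
      ∀ T > (0:ℝ), ∃ C : ℝ, ∀ t ∈ Ioc (0:ℝ) T, ∀ x,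
        (∫ y, p t (x - y) * ρ y) ≤ C * ρ x :=
  poly_weight_admissible_general d a ha p hp ρ hρ
end

section
/- Let k be nonnegative and integrable on [0,∞) with tail h(t) = ∫_t^∞ k(s) ds, let g be nonnegative nonincreasing with g(0) < ∞ and g(t) → 0, and let β > 0 with 2βh(0) < 1. Then the series S(t) := g(t) + max{1, g(0), h(0)} Σ_{n≥1} 2β (2βh(0))^{n−1} (h(t/2^n) + g(t/2^n)) converges for every t ≥ 0 and S(t) → 0 as t → ∞. -/
/-!
Both `h` (the tail of an integrable nonnegative function) and `g` are antitone on `[0, ∞)` with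
limit `0`, hence nonnegative there, so `h + g` is squeezed between `0` and `h 0 + g 0`. The `n`-th
summand is therefore dominated, uniformly in `t ≥ 0`, by a multiple of `(2 β h(0))ⁿ`, which gives
convergence, and Tannery's theorem (dominated convergence for series) lets `t → ∞` termwise.
-/

open MeasureTheory Set Filter Topology

theorem AntitoneOn.le_of_tendsto {u : ℝ → ℝ} {a L : ℝ} (hu : AntitoneOn u (Ici a))
    (hlim : Tendsto u atTop (𝓝 L)) {t : ℝ} (ht : a ≤ t) : L ≤ u t :=
  _root_.le_of_tendsto hlim <| (eventually_ge_atTop t).mono fun _ hs => hu ht (ht.trans hs) hs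

theorem antitoneOn_setIntegral_Ioi {k : ℝ → ℝ} {a : ℝ} (hk : ∀ s > a, 0 ≤ k s)
    (hint : IntegrableOn k (Ioi a)) : AntitoneOn (fun t => ∫ s in Ioi t, k s) (Ici a) := by
  intro s hs t _ hst
  refine setIntegral_mono_set (hint.mono_set (Ioi_subset_Ioi hs)) ?_
    (Eventually.of_forall (Ioi_subset_Ioi hst))
  exact ae_restrict_of_forall_mem measurableSet_Ioi fun x hx => hk x (lt_of_le_of_lt hs hx)

namespace DilatedGeometricSeries

variable {u : ℝ → ℝ} {a : ℕ → ℝ} {c r : ℝ}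

theorem norm_term_le (hu_anti : AntitoneOn u (Ici 0)) (hu_lim : Tendsto u atTop (𝓝 0))
    (ha : ∀ n, 0 < a n) {t : ℝ} (ht : 0 ≤ t) (n : ℕ) :
    ‖c * r ^ n * u (t / a n)‖ ≤ |c| * u 0 * |r| ^ n := by
  have hx : 0 ≤ t / a n := div_nonneg ht (ha n).le
  rw [norm_mul, norm_mul, norm_pow, Real.norm_eq_abs, Real.norm_eq_abs, Real.norm_eq_abs,
    abs_of_nonneg (hu_anti.le_of_tendsto hu_lim hx)]
  calc |c| * |r| ^ n * u (t / a n) ≤ |c| * |r| ^ n * u 0 := by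
        gcongr
        exact hu_anti self_mem_Ici hx hx
    _ = |c| * u 0 * |r| ^ n := by ring

theorem summable (hu_anti : AntitoneOn u (Ici 0)) (hu_lim : Tendsto u atTop (𝓝 0))
    (ha : ∀ n, 0 < a n) (hr : |r| < 1) {t : ℝ} (ht : 0 ≤ t) :
    Summable fun n => c * r ^ n * u (t / a n) :=
  ((summable_geometric_of_lt_one (abs_nonneg r) hr).mul_left _).of_norm_bounded
    (norm_term_le hu_anti hu_lim ha ht)

theorem tendsto_tsum (hu_anti : AntitoneOn u (Ici 0)) (hu_lim : Tendsto u atTop (𝓝 0))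
    (ha : ∀ n, 0 < a n) (hr : |r| < 1) :
    Tendsto (fun t => ∑' n, c * r ^ n * u (t / a n)) atTop (𝓝 0) := by
  have htermwise (n : ℕ) : Tendsto (fun t => c * r ^ n * u (t / a n)) atTop (𝓝 0) := by
    simpa using (hu_lim.comp (tendsto_id.atTop_div_const (ha n))).const_mul (c * r ^ n)
  simpa using tendsto_tsum_of_dominated_convergence (g := fun _ => 0)
    ((summable_geometric_of_lt_one (abs_nonneg r) hr).mul_left (|c| * u 0)) htermwise
    ((eventually_ge_atTop 0).mono fun _ ht => norm_term_le hu_anti hu_lim ha ht)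

end DilatedGeometricSeries

theorem series_bound_converges_to_zero_general (g k h : ℝ → ℝ) (β : ℝ)
    (hg_anti : AntitoneOn g (Ici 0))
    (hg_lim : Tendsto g atTop (nhds 0))
    (hk_nonneg : ∀ t ∈ Ici (0:ℝ), 0 ≤ k t)
    (hk_int : IntegrableOn k (Ici 0))
    (hh : ∀ t, h t = ∫ s in Ioi t, k s)
    (hβ : 0 < β) (hβ' : 2 * β * h 0 < 1)
    (S : ℝ → ℝ)
    (hS : ∀ t, S t = g t + max 1 (max (g 0) (h 0)) *
      ∑' n : ℕ, 2 * β * (2 * β * h 0) ^ n *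
        (h (t / 2 ^ (n + 1)) + g (t / 2 ^ (n + 1)))) :
    (∀ t ≥ (0:ℝ), Summable fun n : ℕ =>
        2 * β * (2 * β * h 0) ^ n *
          (h (t / 2 ^ (n + 1)) + g (t / 2 ^ (n + 1)))) ∧
      Tendsto S atTop (nhds 0) := by
  have hh_anti : AntitoneOn h (Ici 0) := by
    rw [funext hh]
    exact antitoneOn_setIntegral_Ioi (fun s hs => hk_nonneg s (le_of_lt hs))
      (hk_int.mono_set Ioi_subset_Ici_self)
  have hh_lim : Tendsto h atTop (𝓝 0) := by
    rw [funext hh]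
    exact tendsto_integral_Ioi_zero tendsto_id
  have hr : |2 * β * h 0| < 1 := by
    have : 0 ≤ 2 * β * h 0 := mul_nonneg (by positivity) (hh_anti.le_of_tendsto hh_lim le_rfl)
    exact abs_lt.2 ⟨by linarith, hβ'⟩
  have hu_anti : AntitoneOn (fun s => h s + g s) (Ici 0) := hh_anti.add hg_anti
  have hu_lim : Tendsto (fun s => h s + g s) atTop (𝓝 0) := by simpa using hh_lim.add hg_lim
  have ha (n : ℕ) : (0 : ℝ) < 2 ^ (n + 1) := by positivity
  refine ⟨fun t ht => DilatedGeometricSeries.summable hu_anti hu_lim ha hr ht, ?_⟩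
  rw [show S = _ from funext hS]
  simpa using hg_lim.add
    ((DilatedGeometricSeries.tendsto_tsum hu_anti hu_lim ha hr).const_mul (max 1 (max (g 0) (h 0))))

theorem series_bound_converges_to_zero (g k h : ℝ → ℝ) (β : ℝ)
    (hg_nonneg : ∀ t ∈ Ici (0:ℝ), 0 ≤ g t)
    (hg_anti : AntitoneOn g (Ici 0))
    (hg_lim : Tendsto g atTop (nhds 0))
    (hk_nonneg : ∀ t ∈ Ici (0:ℝ), 0 ≤ k t)
    (hk_int : IntegrableOn k (Ici 0))
    (hh : ∀ t, h t = ∫ s in Ioi t, k s)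
    (hβ : 0 < β) (hβ' : 2 * β * h 0 < 1)
    (S : ℝ → ℝ)
    (hS : ∀ t, S t = g t + max 1 (max (g 0) (h 0)) *
      ∑' n : ℕ, 2 * β * (2 * β * h 0) ^ n *
        (h (t / 2 ^ (n + 1)) + g (t / 2 ^ (n + 1)))) :
    (∀ t ≥ (0:ℝ), Summable fun n : ℕ =>
        2 * β * (2 * β * h 0) ^ n *
          (h (t / 2 ^ (n + 1)) + g (t / 2 ^ (n + 1)))) ∧
      Tendsto S atTop (nhds 0) :=
  series_bound_converges_to_zero_general g k h β hg_anti hg_lim hk_nonneg hk_int hh hβ hβ' S hS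
end
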